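/- arXiv:1702.03487 — 6 statements merged into one kernel-verified Lean document; each statement's English description precedes it below -/
import Mathlib

section
/- Let α be a fixed-point-free automorphism of a linear order (I, <). Then for every finite set F ⊆ I there exists m ∈ ℕ such that the image α^m(F) := {α^m(i) : i ∈ F} is disjoint from F. -/
/-- For a fixed-point-free automorphism α of a linear order and any finite
set F, some iterate α^m maps F to a set disjoint from F. -/
theorem stmt_1 {I : Type*} [LinearOrder I] (α : I ≃o I) (hfp : ∀ i : I, α i ≠ i)
    (F : Finset I) :
    ∃ m : ℕ, ∀ x ∈ F, (fun y => α y)^[m] x ∉ F := by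
  have key : ∀ x : I, Function.Injective (fun m => (fun y => (α : I → I) y)^[m] x) := by
    intro x
    rcases lt_or_gt_of_ne (hfp x) with h | h
    · have step : ∀ n : ℕ, (α : I → I) ((fun y => (α : I → I) y)^[n] x) <
          (fun y => (α : I → I) y)^[n] x := by
        intro n
        induction n with
        | zero => simpa using h
        | succ n ih =>
          rw [Function.iterate_succ_apply']
          exact (OrderIso.lt_iff_lt α).2 ih
      have : StrictAnti (fun m => (fun y => (α : I → I) y)^[m] x) := by
        apply strictAnti_nat_of_succ_lt
        intro n
        rw [Function.iterate_succ_apply']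
        exact step n
      exact this.injective
    · have step : ∀ n : ℕ, (fun y => (α : I → I) y)^[n] x <
          (α : I → I) ((fun y => (α : I → I) y)^[n] x) := by
        intro n
        induction n with
        | zero => simpa using h
        | succ n ih =>
          rw [Function.iterate_succ_apply']
          exact (OrderIso.lt_iff_lt α).2 ih
      have : StrictMono (fun m => (fun y => (α : I → I) y)^[m] x) := by
        apply strictMono_nat_of_lt_succ
        intro n
        rw [Function.iterate_succ_apply']
        exact step n
      exact this.injective
  have hfin : Set.Finite (⋃ x ∈ F, (fun m => (fun y => (α : I → I) y)^[m] x) ⁻¹' ↑F) := by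
    apply Set.Finite.biUnion F.finite_toSet
    intro x _
    exact Set.Finite.preimage ((key x).injOn) F.finite_toSet
  obtain ⟨m, hm⟩ := hfin.infinite_compl.nonempty
  refine ⟨m, fun x hx hmem => hm ?_⟩
  exact Set.mem_biUnion hx hmem
end

section
/- Let U be an ultrafilter on a set M with iterated powers U^n, and let f : M^k → M. If {(x₁,…,x_k,y₁,…,y_k) ∈ M^{2k} : f(x₁,…,x_k) = f(y₁,…,y_k)} ∈ U^{2k}, then there exists r ∈ M such that {(y₁,…,y_k) ∈ M^k : f(y₁,…,y_k) = r} ∈ U^k. -/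
/-- Left section of a subset of M^{n+1}. -/
def secL {M : Type*} {n : ℕ} (X : Set (Fin (n + 1) → M)) (m : M) : Set (Fin n → M) :=
  {s | Fin.cons m s ∈ X}

/-- `iterMem U n X` says X ∈ U^{n+1} (so `iterMem U 0` corresponds to U¹ = U). -/
def iterMem {M : Type*} (U : Ultrafilter M) : (n : ℕ) → Set (Fin (n + 1) → M) → Prop
  | 0, X => {m : M | (fun _ => m) ∈ X} ∈ U
  | n + 1, X => {m : M | iterMem U n (secL X m)} ∈ U

/-!
Peeling off the first coordinate of a set in U^{m+n} and picking a point of the (nonempty)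
U-large set of good first coordinates, m times over, yields a prefix x ∈ M^m whose section
{y | x ++ y ∈ X} lies in U^n. For the agreement set of f with m = n = k this section is
{y | f x = f y}, so r = f x works.
-/

namespace iterMem

variable {M : Type*} {U : Ultrafilter M}

theorem of_index_eq {a b : ℕ} (e : a = b) {X : Set (Fin (a + 1) → M)} (h : iterMem U a X) :
    iterMem U b {t | t ∘ Fin.cast (congrArg (· + 1) e) ∈ X} := by
  subst e
  exact h

theorem exists_append_mem :
    ∀ (m n : ℕ) (X : Set (Fin (m + n + 1) → M)), iterMem U (m + n) X →
      ∃ x : Fin m → M, iterMem U n {y | Fin.append x y ∈ X}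
  | 0, n, X, h => ⟨Fin.elim0, by
    simp only [Fin.elim0_append]
    exact of_index_eq (zero_add n) h⟩
  | m + 1, n, X, h => by
    obtain ⟨a, ha⟩ := Ultrafilter.nonempty_of_mem (of_index_eq (Nat.succ_add m n) h)
    obtain ⟨x, hx⟩ := exists_append_mem m n (secL _ a) ha
    refine ⟨Fin.cons a x, ?_⟩
    simp only [Fin.append_cons]
    exact hx

end iterMem

/-- if f agrees U^{2k}-often on pairs of k-tuples, then f is
U^k-almost-everywhere equal to a constant r. -/
theorem stmt_10 {M : Type*} (U : Ultrafilter M) (k : ℕ) (f : (Fin (k + 1) → M) → M)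
    (h : iterMem U ((k + 1) + k)
      {w : Fin ((k + 1) + (k + 1)) → M |
        f (fun i => w (Fin.castAdd (k + 1) i)) = f (fun i => w (Fin.natAdd (k + 1) i))}) :
    ∃ r : M, iterMem U k {t : Fin (k + 1) → M | f t = r} := by
  obtain ⟨x, hx⟩ := iterMem.exists_append_mem (k + 1) k _ h
  refine ⟨f x, ?_⟩
  simpa only [Set.mem_ofPred_eq, Fin.append_left, Fin.append_right, eq_comm] using hx
end

section
/- Suppose M* is an elementary extension of a structure M with definable Skolem functions, and (I, <) with I ⊆ M* \ M is a set of tight indiscernibles generating M* over M, where I is isomorphic to the ordered set ℤ of integers. Then the map α sending f(i₁,…,iₙ) to f(i₁+1,…,iₙ+1) (for parametrically M-definable f and i₁ < … < iₙ in I) is a well-defined automorphism of M* that fixes every element of M, and moreover every finite iterate αᵏ (k ≥ 1) moves every element of M* \ M. -/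
open FirstOrder Language

/-- `f : N^k → N` is parametrically definable (over the parameter set `A`). -/
def ParamDefFun (L : Language) {N : Type*} [L.Structure N] (A : Set N) (k : ℕ)
    (f : (Fin k → N) → N) : Prop :=
  Set.Definable A L {x : Fin (k + 1) → N | x (Fin.last k) = f (fun i => x i.castSucc)}

/-- `(ι,<)`, presented by `e : ι → N`, is a set of order indiscernibles over the
parameter set `A`: any two increasing tuples satisfy the same formulas with
parameters from `A`. -/
def OrderIndisc (L : Language) {N : Type*} [L.Structure N] (A : Set N)
    {ι : Type*} [LinearOrder ι] (e : ι → N) : Prop :=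
  ∀ (k : ℕ) (φ : (L[[↥A]]).Formula (Fin k)) (i j : Fin k → ι),
    StrictMono i → StrictMono j → (φ.Realize (e ∘ i) ↔ φ.Realize (e ∘ j))

/-- Property (2) of tight indiscernibles: `N` is generated over `A` by the image of `e`,
via parametrically `A`-definable functions applied to increasing tuples. -/
def GeneratedBy (L : Language) {N : Type*} [L.Structure N] (A : Set N)
    {ι : Type*} [LinearOrder ι] (e : ι → N) : Prop :=
  ∀ a : N, ∃ (k : ℕ) (f : (Fin k → N) → N), ParamDefFun L A k f ∧
    ∃ i : Fin k → ι, StrictMono i ∧ f (e ∘ i) = a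

/-- Property (3) of tight indiscernibles: if a parametrically `A`-definable function takes
the same value at two increasing tuples, the second lying entirely above the first, then
that common value lies in `A`. -/
def TightProp (L : Language) {N : Type*} [L.Structure N] (A : Set N)
    {ι : Type*} [LinearOrder ι] (e : ι → N) : Prop :=
  ∀ (k : ℕ) (f : (Fin k → N) → N), ParamDefFun L A k f →
    ∀ i j : Fin k → ι, StrictMono i → StrictMono j → (∀ a b, i a < j b) →
      f (e ∘ i) = f (e ∘ j) → f (e ∘ i) ∈ A

/-- `A` has definable Skolem functions (realized in `N`). -/
def HasDefSkolem (L : Language) {N : Type*} [L.Structure N] (A : Set N) : Prop :=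
  ∀ (n : ℕ) (φ : (L[[↥A]]).Formula (Fin (n + 1))), ∃ f : (Fin n → N) → N,
    ParamDefFun L A n f ∧
      ∀ x : Fin n → N, (∃ b, φ.Realize (Fin.snoc x b)) → φ.Realize (Fin.snoc x (f x))

/-!
Every element of `N` has the form `f (e ∘ i)` with `f` definable over `A`. For a strictly
monotone map `π` of the index order, the rule `f (e ∘ i) ↦ f (e ∘ π ∘ i)` is well defined: after
enumerating the union of the ranges of `i` and `j` increasingly, an equation
`f (e ∘ i) = g (e ∘ j)` becomes an `A`-definable property of one increasing tuple, and
indiscernibility carries it to the image of that tuple under `π`. The same transfer shows that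
the resulting map preserves every `A`-definable relation, hence the basic functions and relations,
and it fixes `A` because constants from `A` are definable. Lifting `π` and `π⁻¹` for an order
automorphism gives an automorphism; for `π = (· + 1)` on `ℤ` this is `α`.

If `α^[k] x = x` with `x = f (e ∘ i)`, then also `α^[k * M] x = x`, i.e.
`f (e ∘ i) = f (e ∘ (i + k * M))`; for `M` large the second tuple lies entirely above the first,
and tightness puts `x` in `A`.
-/

section Definability

variable {L : Language} {N : Type*} [L.Structure N] {A : Set N}

theorem paramDefFun_iff_definableFun {k : ℕ} {f : (Fin k → N) → N} :
    ParamDefFun L A k f ↔ A.DefinableFun L f := by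
  unfold ParamDefFun Set.DefinableFun
  constructor
  · intro h
    convert h.preimage_comp (Fin.lastCases none some : Fin (k + 1) → Option (Fin k)) using 1
    ext w
    simp [Function.tupleGraph, Function.comp_def, eq_comm]
  · intro h
    convert h.preimage_comp (fun o : Option (Fin k) => o.elim (Fin.last k) Fin.castSucc) using 1
    ext x
    simp [Function.tupleGraph, Function.comp_def, eq_comm]

theorem Set.DefinableFun.comp_reindex {α β : Type*} [Finite α] {f : (α → N) → N}
    (hf : A.DefinableFun L f) (σ : α → β) : A.DefinableFun L fun v => f (v ∘ σ) :=
  hf.comp fun _ => Set.DefinableFun.proj L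

end Definability

theorem Finset.exists_eq_orderEmbOfFin_comp {ι : Type*} [LinearOrder ι] (T : Finset ι) {k : ℕ}
    (i : Fin k → ι) (hi : ∀ a, i a ∈ T) : ∃ σ : Fin k → Fin T.card, i = T.orderEmbOfFin rfl ∘ σ := by
  have hrange (a : Fin k) : i a ∈ Set.range (T.orderEmbOfFin rfl) := by
    rw [Finset.range_orderEmbOfFin]
    exact hi a
  choose σ hσ using hrange
  exact ⟨σ, funext fun a => (hσ a).symm⟩

theorem Finite.exists_nat_forall_lt_add {β : Type*} [Finite β] (i : β → ℤ) :
    ∃ M : ℕ, ∀ a b, i a < i b + M := by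
  obtain ⟨B, hB⟩ := (Set.toFinite (Set.range i)).bddAbove
  obtain ⟨C, hC⟩ := (Set.toFinite (Set.range i)).bddBelow
  refine ⟨(B - C).toNat + 1, fun a b => ?_⟩
  have ha := hB (Set.mem_range_self a)
  have hb := hC (Set.mem_range_self b)
  have := Int.self_le_toNat (B - C)
  push_cast
  omega

def IsLift (L : Language) {N : Type*} [L.Structure N] (A : Set N) {ι : Type*} (e : ι → N)
    (π : ι → ι) (φ : N → N) : Prop :=
  ∀ (k : ℕ) (f : (Fin k → N) → N), A.DefinableFun L f →
    ∀ i : Fin k → ι, φ (f (e ∘ i)) = f (e ∘ π ∘ i)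

namespace IsLift

variable {L : Language} {N : Type*} [L.Structure N] {A : Set N} {ι : Type*} {e : ι → N}
  {π ρ : ι → ι} {φ ψ : N → N}

theorem apply_of_mem (hφ : IsLift L A e π φ) {a : N} (ha : a ∈ A) : φ a = a :=
  hφ 0 (fun _ => a) (L.definableFun_const _ ha) Fin.elim0

theorem iterate (hφ : IsLift L A e π φ) : ∀ n : ℕ, IsLift L A e (π^[n]) (φ^[n])
  | 0 => fun _ _ _ _ => rfl
  | n + 1 => fun k f hf i => by
    rw [Function.iterate_succ_apply, hφ k f hf i, iterate hφ n k f hf, Function.iterate_succ]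
    rfl

end IsLift

section Indiscernibles

variable {L : Language} {N : Type*} [L.Structure N] {A : Set N} {ι : Type*} [LinearOrder ι]
  {e : ι → N}

theorem OrderIndisc.mem_iff (hind : OrderIndisc L A e) {k : ℕ} {s : Set (Fin k → N)}
    (hs : A.Definable L s) {i j : Fin k → ι} (hi : StrictMono i) (hj : StrictMono j) :
    e ∘ i ∈ s ↔ e ∘ j ∈ s := by
  obtain ⟨φ, rfl⟩ := hs
  exact hind k φ i j hi hj

theorem OrderIndisc.apply_comp_eq (hind : OrderIndisc L A e) {π : ι → ι} (hπ : StrictMono π)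
    {k l : ℕ} {f : (Fin k → N) → N} {g : (Fin l → N) → N}
    (hf : A.DefinableFun L f) (hg : A.DefinableFun L g) {i : Fin k → ι} {j : Fin l → ι}
    (h : f (e ∘ i) = g (e ∘ j)) : f (e ∘ π ∘ i) = g (e ∘ π ∘ j) := by
  classical
  set T := Finset.univ.image i ∪ Finset.univ.image j
  obtain ⟨σ, hσ⟩ := T.exists_eq_orderEmbOfFin_comp i (by simp [T])
  obtain ⟨τ, hτ⟩ := T.exists_eq_orderEmbOfFin_comp j (by simp [T])
  set m := T.orderEmbOfFin rfl
  have hs : A.Definable L {v | f (v ∘ σ) = g (v ∘ τ)} :=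
    (hf.comp_reindex σ).ofPred_eq (hg.comp_reindex τ)
  rw [hσ, hτ] at h ⊢
  exact (hind.mem_iff hs m.strictMono (hπ.comp m.strictMono)).1 h

theorem GeneratedBy.exists_common_repr (hgen : GeneratedBy L A e) {β : Type*} [Finite β]
    (x : β → N) : ∃ (p : ℕ) (m : Fin p → ι) (g : β → (Fin p → N) → N), StrictMono m ∧
      (∀ t, A.DefinableFun L (g t)) ∧ ∀ t, g t (e ∘ m) = x t := by
  classical
  have := Fintype.ofFinite β
  choose k f hf i _ hx using fun t => hgen (x t)
  set T : Finset ι := Finset.univ.biUnion fun t => Finset.univ.image (i t)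
  choose σ hσ using fun t => T.exists_eq_orderEmbOfFin_comp (i t) fun a => by
    simp only [T, Finset.mem_biUnion, Finset.mem_image]
    exact ⟨t, Finset.mem_univ _, a, Finset.mem_univ _, rfl⟩
  refine ⟨T.card, T.orderEmbOfFin rfl, fun t v => f t (v ∘ σ t), (T.orderEmbOfFin rfl).strictMono,
    fun t => (paramDefFun_iff_definableFun.1 (hf t)).comp_reindex (σ t), fun t => ?_⟩
  rw [← hx t, hσ t]
  rfl

theorem OrderIndisc.exists_isLift (hind : OrderIndisc L A e) (hgen : GeneratedBy L A e)
    {π : ι → ι} (hπ : StrictMono π) : ∃ φ : N → N, IsLift L A e π φ := by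
  choose k f hf i _ hx using hgen
  exact ⟨fun a => f a (e ∘ π ∘ i a), fun n g hg j =>
    hind.apply_comp_eq hπ (paramDefFun_iff_definableFun.1 (hf _)) hg (hx _)⟩

namespace IsLift

variable {π ρ : ι → ι} {φ ψ : N → N}

theorem leftInverse (hφ : IsLift L A e π φ) (hψ : IsLift L A e ρ ψ)
    (hgen : GeneratedBy L A e) (h : Function.LeftInverse π ρ) : Function.LeftInverse φ ψ := by
  intro a
  obtain ⟨k, f, hf, i, -, rfl⟩ := hgen a
  rw [paramDefFun_iff_definableFun] at hf
  rw [hψ k f hf, hφ k f hf]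
  congr
  funext t
  simp [h (i t)]

theorem comp_mem_iff (hφ : IsLift L A e π φ) (hind : OrderIndisc L A e)
    (hgen : GeneratedBy L A e) (hπ : StrictMono π) {β : Type*} [Finite β] {s : Set (β → N)}
    (hs : A.Definable L s) (x : β → N) : φ ∘ x ∈ s ↔ x ∈ s := by
  obtain ⟨p, m, g, hm, hg, hx⟩ := hgen.exists_common_repr x
  have hφx : φ ∘ x = fun t => g t (e ∘ π ∘ m) := funext fun t => by
    rw [Function.comp_apply, ← hx t, hφ p (g t) (hg t)]
  rw [hφx, show x = fun t => g t (e ∘ m) from funext fun t => (hx t).symm]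
  exact hind.mem_iff (hs.preimage_map hg) (hπ.comp hm) hm

theorem map_funMap (hφ : IsLift L A e π φ) (hind : OrderIndisc L A e)
    (hgen : GeneratedBy L A e) (hπ : StrictMono π) {n : ℕ} (F : L.Functions n) (x : Fin n → N) :
    φ (Structure.funMap F x) = Structure.funMap F (φ ∘ x) := by
  let y : Option (Fin n) → N := fun o => o.elim (Structure.funMap F x) x
  have hy : y ∈ Function.tupleGraph (Structure.funMap F) := rfl
  exact ((hφ.comp_mem_iff hind hgen hπ ((Set.DefinableFun.fun_symbol F).of_empty) y).2 hy).symm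

theorem map_relMap (hφ : IsLift L A e π φ) (hind : OrderIndisc L A e)
    (hgen : GeneratedBy L A e) (hπ : StrictMono π) {n : ℕ} (r : L.Relations n) (x : Fin n → N) :
    Structure.RelMap r (φ ∘ x) ↔ Structure.RelMap r x := by
  have hs : A.Definable L {y : Fin n → N | Structure.RelMap r y} :=
    (Set.empty_definable_iff.2 ⟨r.formula Term.var, by ext; simp⟩).mono (Set.empty_subset A)
  exact hφ.comp_mem_iff hind hgen hπ hs x

end IsLift

theorem OrderIndisc.exists_equiv_isLift (hind : OrderIndisc L A e) (hgen : GeneratedBy L A e)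
    (π : ι ≃o ι) : ∃ α : N ≃[L] N, IsLift L A e π α := by
  obtain ⟨φ, hφ⟩ := hind.exists_isLift hgen π.strictMono
  obtain ⟨ψ, hψ⟩ := hind.exists_isLift hgen π.symm.strictMono
  refine ⟨{ toFun := φ
            invFun := ψ
            left_inv := hψ.leftInverse hφ hgen π.symm_apply_apply
            right_inv := hφ.leftInverse hψ hgen π.apply_symm_apply
            map_fun' := hφ.map_funMap hind hgen π.strictMono
            map_rel' := hφ.map_relMap hind hgen π.strictMono }, hφ⟩

end Indiscernibles

theorem TightProp.not_isPeriodicPt {L : Language} {N : Type*} [L.Structure N] {A : Set N}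
    {e : ℤ → N} (htight : TightProp L A e) (hgen : GeneratedBy L A e) {φ : N → N}
    (hφ : IsLift L A e (· + 1) φ) {k : ℕ} (hk : 0 < k) {x : N} (hx : x ∉ A) :
    ¬ Function.IsPeriodicPt φ k x := by
  intro hper
  obtain ⟨r, f, hf, i, hi, rfl⟩ := hgen x
  obtain ⟨M, hM⟩ := Finite.exists_nat_forall_lt_add i
  have hgap : ∀ a b, i a < i b + (k * M : ℕ) := fun a b => by
    have := hM a b
    have : (M : ℤ) ≤ k * M := le_mul_of_one_le_left (by positivity) (by exact_mod_cast hk)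
    push_cast
    omega
  have hshift : f (e ∘ i) = f (e ∘ fun t => i t + (k * M : ℕ)) := by
    have := hφ.iterate (k * M) r f (paramDefFun_iff_definableFun.1 hf) i
    rw [hper.mul_const M, add_right_iterate, nsmul_one] at this
    exact this
  exact hx (htight r f hf i _ hi (hi.add_const _) hgap hshift)

theorem stmt_11_general {L : Language} {N : Type*} [L.Structure N]
    (S : L.ElementarySubstructure N) (e : ℤ → N)
    (hind : OrderIndisc L (S : Set N) e)
    (hgen : GeneratedBy L (S : Set N) e)
    (htight : TightProp L (S : Set N) e) :
    ∃ α : N ≃[L] N,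
      (∀ m : N, m ∈ S → α m = m) ∧
      (∀ (k : ℕ) (f : (Fin k → N) → N), ParamDefFun L (S : Set N) k f →
        ∀ i : Fin k → ℤ, StrictMono i →
          α (f (e ∘ i)) = f (e ∘ fun t => i t + 1)) ∧
      (∀ k : ℕ, 0 < k → ∀ x : N, x ∉ S → (fun y => α y)^[k] x ≠ x) := by
  obtain ⟨α, hα⟩ := hind.exists_equiv_isLift hgen (OrderIso.addRight (1 : ℤ))
  exact ⟨α, fun m hm => hα.apply_of_mem hm,
    fun k f hf i _ => hα k f (paramDefFun_iff_definableFun.1 hf) i,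
    fun k hk x hx => htight.not_isPeriodicPt hgen hα hk hx⟩

/-- with tight indiscernibles of order type ℤ, the shift
f(i₁,…,iₙ) ↦ f(i₁+1,…,iₙ+1) is a well-defined automorphism of M* fixing M pointwise,
all of whose positive iterates move every element of M* \ M. -/
theorem stmt_11 {L : Language} {N : Type*} [L.Structure N]
    (S : L.ElementarySubstructure N) (e : ℤ → N)
    (hinj : Function.Injective e) (hdisj : ∀ z : ℤ, e z ∉ S)
    (hskolem : HasDefSkolem L (S : Set N))
    (hind : OrderIndisc L (S : Set N) e)
    (hgen : GeneratedBy L (S : Set N) e)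
    (htight : TightProp L (S : Set N) e) :
    ∃ α : N ≃[L] N,
      (∀ m : N, m ∈ S → α m = m) ∧
      (∀ (k : ℕ) (f : (Fin k → N) → N), ParamDefFun L (S : Set N) k f →
        ∀ i : Fin k → ℤ, StrictMono i →
          α (f (e ∘ i)) = f (e ∘ fun t => i t + 1)) ∧
      (∀ k : ℕ, 0 < k → ∀ x : N, x ∉ S → (fun y => α y)^[k] x ≠ x) :=
  stmt_11_general S e hind hgen htight
end

section
/- Tightness Lemma: Suppose (I,<) is an infinite linear order forming a set of tight indiscernibles generating M* over M. If f and g are parametrically M-definable functions and there are disjoint finite subsets S₀ = {i₁,…,i_p} and S₁ = {j₁,…,j_q} of I with f(i₁,…,i_p) = g(j₁,…,j_q), then this common value lies in M. -/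
open FirstOrder Language

section Aux

variable {L : Language} {N : Type*} [L.Structure N] {A : Set N}
variable {ι : Type*} [LinearOrder ι] {e : ι → N}

lemma ParamDefFun.reindex {p n : ℕ} {f : (Fin p → N) → N}
    (hf : ParamDefFun L A p f) (u : Fin p → Fin n) :
    ParamDefFun L A n fun w => f (w ∘ u) := by
  unfold ParamDefFun
  have h := Set.Definable.preimage_comp
    (Fin.snoc (fun a => (u a).castSucc) (Fin.last n) : Fin (p + 1) → Fin (n + 1)) hf
  convert h using 1
  ext x
  simp only [Set.mem_preimage, Set.mem_setOf_eq, Function.comp_apply,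
    Fin.snoc_last, Fin.snoc_castSucc]
  rfl

lemma defFun_eq_definable {n : ℕ} {F G : (Fin n → N) → N}
    (hF : ParamDefFun L A n F) (hG : ParamDefFun L A n G) :
    A.Definable L {w : Fin n → N | F w = G w} := by
  have h := (hF.inter hG).image_comp (Fin.castSucc : Fin n → Fin (n + 1))
  convert h using 1
  ext w
  simp only [Set.mem_setOf_eq, Set.mem_image, Set.mem_inter_iff]
  constructor
  · intro hw
    have hv : (fun i : Fin n => (Fin.snoc w (F w) : Fin (n + 1) → N) i.castSucc) = w :=
      funext fun i => Fin.snoc_castSucc _ _ _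
    refine ⟨Fin.snoc w (F w), ⟨?_, ?_⟩, funext fun t => Fin.snoc_castSucc _ _ _⟩
    · rw [hv, Fin.snoc_last]
    · rw [hv, Fin.snoc_last]; exact hw
  · rintro ⟨x, ⟨h1, h2⟩, rfl⟩
    exact h1.symm.trans h2

lemma defFun_eq_const_definable {n : ℕ} {F : (Fin n → N) → N}
    (hF : ParamDefFun L A n F) {a : N} (ha : a ∈ A) :
    A.Definable L {w : Fin n → N | F w = a} := by
  have hc : A.Definable L {x : Fin (n + 1) → N | x (Fin.last n) = a} := by
    refine ⟨Term.equal (Term.var (Fin.last n)) (Constants.term (L.con (⟨a, ha⟩ : A))), ?_⟩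
    ext x
    simp [Term.realize_con]
  have h := (hF.inter hc).image_comp (Fin.castSucc : Fin n → Fin (n + 1))
  convert h using 1
  ext w
  simp only [Set.mem_setOf_eq, Set.mem_image, Set.mem_inter_iff]
  constructor
  · intro hw
    have hv : (fun i : Fin n => (Fin.snoc w (F w) : Fin (n + 1) → N) i.castSucc) = w :=
      funext fun i => Fin.snoc_castSucc _ _ _
    refine ⟨Fin.snoc w (F w), ⟨?_, ?_⟩, funext fun t => Fin.snoc_castSucc _ _ _⟩
    · rw [hv, Fin.snoc_last]
    · rw [Fin.snoc_last]; exact hw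
  · rintro ⟨x, ⟨h1, h2⟩, rfl⟩
    exact h1.symm.trans h2

def catZ (n k : ℕ) (t : Fin n) : Fin (n + n) :=
  if n ≤ (t : ℕ) + k then ⟨(t : ℕ) + n, Nat.add_lt_add_right t.isLt n⟩
  else ⟨(t : ℕ), Nat.lt_of_lt_of_le t.isLt (Nat.le_add_right n n)⟩

lemma catZ_strictMono (n k : ℕ) : StrictMono (catZ n k) := by
  intro s t hst
  have hst' : (s : ℕ) < t := hst
  unfold catZ
  split_ifs <;> exact Fin.mk_lt_mk.mpr (by omega)

lemma catZ_succ_eq (n k : ℕ) (t : Fin n) (ht : (t : ℕ) + k + 1 ≠ n) :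
    catZ n k t = catZ n (k + 1) t := by
  unfold catZ
  exact if_congr (by omega) rfl rfl

lemma catZ_zero_lt_last (n : ℕ) (a b : Fin n) : catZ n 0 a < catZ n n b := by
  have ha := a.isLt
  have hb := b.isLt
  unfold catZ
  rw [if_neg (by omega), if_pos (by omega)]
  exact Fin.mk_lt_mk.mpr (by omega)

lemma caterpillar [Infinite ι]
    (hind : OrderIndisc L A e) (htight : TightProp L A e)
    {n : ℕ} {F : (Fin n → N) → N} (hF : ParamDefFun L A n F)
    (hstep : ∀ z z' : Fin n → ι, StrictMono z → StrictMono z' →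
      (∃ t₀ : Fin n, ∀ t, t ≠ t₀ → z t = z' t) → F (e ∘ z) = F (e ∘ z'))
    {z : Fin n → ι} (hz : StrictMono z) : F (e ∘ z) ∈ A := by
  obtain ⟨s, hs⟩ := Infinite.exists_subset_card_eq ι (n + n)
  have hℓ : StrictMono (⇑(s.orderEmbOfFin hs)) := (s.orderEmbOfFin hs).strictMono
  set ℓ : Fin (n + n) → ι := ⇑(s.orderEmbOfFin hs) with hldef
  have hmono : ∀ k, StrictMono (fun t => ℓ (catZ n k t)) := fun k =>
    hℓ.comp (catZ_strictMono n k)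
  have chain : ∀ k, k ≤ n →
      F (e ∘ fun t => ℓ (catZ n 0 t)) = F (e ∘ fun t => ℓ (catZ n k t)) := by
    intro k
    induction k with
    | zero => intro _; rfl
    | succ k ih =>
      intro hk
      have hkn : k < n := hk
      refine (ih (by omega)).trans ?_
      refine hstep _ _ (hmono k) (hmono (k + 1)) ?_
      refine ⟨⟨n - 1 - k, by omega⟩, fun t ht => ?_⟩
      have htk : (t : ℕ) + k + 1 ≠ n := by
        intro hC
        exact ht (Fin.ext (by simpa using (by omega : (t : ℕ) = n - 1 - k)))
      exact congrArg ℓ (catZ_succ_eq n k t htk)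
  have hmem : F (e ∘ fun t => ℓ (catZ n 0 t)) ∈ A :=
    htight n F hF _ _ (hmono 0) (hmono n)
      (fun a b => hℓ (catZ_zero_lt_last n a b)) (chain n le_rfl)
  obtain ⟨φ, hφ⟩ := defFun_eq_const_definable hF hmem
  have h0 : (e ∘ fun t => ℓ (catZ n 0 t)) ∈
      {w : Fin n → N | F w = F (e ∘ fun t => ℓ (catZ n 0 t))} := rfl
  rw [hφ] at h0
  have hz' := (hind n φ _ z (hmono 0) hz).1 h0
  have hz2 : (e ∘ z) ∈ {w : Fin n → N | F w = F (e ∘ fun t => ℓ (catZ n 0 t))} := by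
    rw [hφ]; exact hz'
  have hz3 : F (e ∘ z) = F (e ∘ fun t => ℓ (catZ n 0 t)) := hz2
  rw [hz3]
  exact hmem

end Aux

/-- Tightness Lemma: if f and g are applied to tuples enumerating disjoint
finite subsets of an infinite linear order of tight indiscernibles and the values agree,
then the common value lies in M. -/
theorem stmt_12 {L : Language} {N : Type*} [L.Structure N]
    (S : L.ElementarySubstructure N)
    {ι : Type*} [LinearOrder ι] [Infinite ι] (e : ι → N)
    (hinj : Function.Injective e) (hdisj : ∀ x : ι, e x ∉ S)
    (hskolem : HasDefSkolem L (S : Set N))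
    (hind : OrderIndisc L (S : Set N) e)
    (hgen : GeneratedBy L (S : Set N) e)
    (htight : TightProp L (S : Set N) e)
    (p q : ℕ) (f : (Fin p → N) → N) (g : (Fin q → N) → N)
    (hf : ParamDefFun L (S : Set N) p f) (hg : ParamDefFun L (S : Set N) q g)
    (i : Fin p → ι) (j : Fin q → ι)
    (hi : Function.Injective i) (hj : Function.Injective j)
    (hdis : ∀ a b, i a ≠ j b)
    (heq : f (e ∘ i) = g (e ∘ j)) :
    f (e ∘ i) ∈ S := by
  classical
  let T : Finset ι := Finset.univ.image i ∪ Finset.univ.image j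
  let σ := T.orderIsoOfFin rfl
  let m : Fin T.card → ι := fun t => ((σ t : ι))
  have hm : StrictMono m := fun a b h => σ.strictMono h
  have hiT : ∀ a, i a ∈ T := fun a =>
    Finset.mem_union_left _ (Finset.mem_image_of_mem i (Finset.mem_univ a))
  have hjT : ∀ b, j b ∈ T := fun b =>
    Finset.mem_union_right _ (Finset.mem_image_of_mem j (Finset.mem_univ b))
  let u : Fin p → Fin T.card := fun a => σ.symm ⟨i a, hiT a⟩
  let v : Fin q → Fin T.card := fun b => σ.symm ⟨j b, hjT b⟩
  have hmu : ∀ a, m (u a) = i a := fun a => by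
    show ((σ (σ.symm ⟨i a, hiT a⟩) : ι)) = i a
    rw [OrderIso.apply_symm_apply]
  have hmv : ∀ b, m (v b) = j b := fun b => by
    show ((σ (σ.symm ⟨j b, hjT b⟩) : ι)) = j b
    rw [OrderIso.apply_symm_apply]
  have huv : ∀ a b, u a ≠ v b := by
    intro a b h
    exact hdis a b (by rw [← hmu a, ← hmv b, h])
  have hmui : m ∘ u = i := funext hmu
  have hmvj : m ∘ v = j := funext hmv
  let F : (Fin T.card → N) → N := fun w => f (w ∘ u)
  let G : (Fin T.card → N) → N := fun w => g (w ∘ v)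
  have hF : ParamDefFun L (S : Set N) T.card F := hf.reindex u
  have hG : ParamDefFun L (S : Set N) T.card G := hg.reindex v
  obtain ⟨φ, hφ⟩ := defFun_eq_definable hF hG
  have hmemm : (e ∘ m) ∈ {w : Fin T.card → N | F w = G w} := by
    show f (e ∘ (m ∘ u)) = g (e ∘ (m ∘ v))
    rw [hmui, hmvj]
    exact heq
  have keyAll : ∀ z : Fin T.card → ι, StrictMono z → F (e ∘ z) = G (e ∘ z) := by
    intro z hz
    rw [hφ] at hmemm
    have h2 := (hind T.card φ m z hm hz).1 hmemm
    have h3 : (e ∘ z) ∈ {w : Fin T.card → N | F w = G w} := by rw [hφ]; exact h2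
    exact h3
  have hstep : ∀ z z' : Fin T.card → ι, StrictMono z → StrictMono z' →
      (∃ t₀, ∀ t, t ≠ t₀ → z t = z' t) → F (e ∘ z) = F (e ∘ z') := by
    rintro z z' hz hz' ⟨t₀, hag⟩
    by_cases hcase : ∃ a, u a = t₀
    · have hvne : ∀ b, v b ≠ t₀ := by
        intro b hb
        obtain ⟨a, ha⟩ := hcase
        exact huv a b (ha.trans hb.symm)
      have hGG : G (e ∘ z) = G (e ∘ z') :=
        congrArg g (funext fun b => congrArg e (hag (v b) (hvne b)))
      rw [keyAll z hz, keyAll z' hz', hGG]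
    · push_neg at hcase
      exact congrArg f (funext fun a => congrArg e (hag (u a) (hcase a)))
  have hfin : F (e ∘ m) ∈ (S : Set N) := caterpillar hind htight hF hstep hm
  have hfi : F (e ∘ m) = f (e ∘ i) := by
    show f (e ∘ (m ∘ u)) = f (e ∘ i)
    rw [hmui]
  rwa [hfi] at hfin
end

section
/- (Property 3 of tight indiscernibles from dimensional ultrapowers, combinatorial core) Let U be an ultrafilter on a set M, U^n its iterated powers, and f : M^k → M. If {(x₁,…,x_k,y₁,…,y_k) ∈ M^{2k} : f(x⃗) = f(y⃗)} ∈ U^{2k}, then there exists s ∈ M^k and r ∈ M with r = f(s) such that {t ∈ M^k : f(t) = r} ∈ U^k. -/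
lemma iterMem_nonempty {M : Type*} (U : Ultrafilter M) :
    ∀ (n : ℕ) (X : Set (Fin (n + 1) → M)), iterMem U n X → X.Nonempty
  | 0, X, h => by
    obtain ⟨m, hm⟩ := U.nonempty_of_mem h
    exact ⟨_, hm⟩
  | n + 1, X, h => by
    obtain ⟨m, hm⟩ := U.nonempty_of_mem h
    obtain ⟨s, hs⟩ := iterMem_nonempty U n _ hm
    exact ⟨Fin.cons m s, hs⟩

lemma iterMem_cast {M : Type*} (U : Ultrafilter M) {n n' : ℕ} (h : n = n')
    (X : Set (Fin (n + 1) → M)) :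
    iterMem U n X ↔
      iterMem U n' {w : Fin (n' + 1) → M | (w ∘ Fin.cast (by rw [h]) : Fin (n + 1) → M) ∈ X} := by
  subst h
  exact Iff.rfl

lemma iterMem_split {M : Type*} (U : Ultrafilter M) :
    ∀ (a b : ℕ) (X : Set (Fin ((a + 1) + (b + 1)) → M)),
      iterMem U ((a + 1) + b) X →
      iterMem U a {x : Fin (a + 1) → M |
        iterMem U b {y : Fin (b + 1) → M | Fin.append x y ∈ X}}
  | 0, b, X, h => by
    have h' := (iterMem_cast U (Nat.add_comm 1 b) X).mp h
    show {m : M | (fun _ => m) ∈ _} ∈ U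
    refine U.toFilter.mem_of_superset h' ?_
    intro m hm
    simp only [Set.mem_setOf_eq]
    have : secL {w : Fin (b + 1 + 1) → M |
        (w ∘ Fin.cast (by rw [Nat.add_comm 1 b]) : Fin (1 + b + 1) → M) ∈ X} m =
        {y : Fin (b + 1) → M | Fin.append (fun _ => m) y ∈ X} := by
      ext y
      simp only [secL, Set.mem_setOf_eq, Fin.append_left_eq_cons, Fin.cons_zero]
    rw [← this]
    exact hm
  | a + 1, b, X, h => by
    have h' := (iterMem_cast U (show (a + 1 + 1) + b = ((a + 1) + b) + 1 by omega) X).mp h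
    show {m : M | iterMem U (a + 1 - 1) _} ∈ U
    refine U.toFilter.mem_of_superset h' ?_
    intro m hm
    simp only [Set.mem_setOf_eq] at hm ⊢
    have ih := iterMem_split U a b _ hm
    have : {x : Fin (a + 1) → M | iterMem U b {y : Fin (b + 1) → M |
        Fin.append x y ∈ secL {w : Fin ((a + 1) + b + 1 + 1) → M |
          (w ∘ Fin.cast (by omega) : Fin ((a + 1 + 1) + b + 1) → M) ∈ X} m}} =
        secL {x : Fin (a + 1 + 1) → M |
          iterMem U b {y : Fin (b + 1) → M | Fin.append x y ∈ X}} m := by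
      ext x
      simp only [secL, Set.mem_setOf_eq]
      congr! 2
      ext y
      simp only [Set.mem_setOf_eq, Fin.append_cons]
      exact Iff.rfl
    rw [← this]
    exact ih

/-- combinatorial core of property (3): if f agrees U^{2k}-often on pairs of
k-tuples, then there is s ∈ M^k with f equal to r = f(s) on a U^k-large set. -/
theorem stmt_15 {M : Type*} (U : Ultrafilter M) (k : ℕ) (f : (Fin (k + 1) → M) → M)
    (h : iterMem U ((k + 1) + k)
      {w : Fin ((k + 1) + (k + 1)) → M |
        f (fun i => w (Fin.castAdd (k + 1) i)) = f (fun i => w (Fin.natAdd (k + 1) i))}) :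
    ∃ (s : Fin (k + 1) → M) (r : M), r = f s ∧
      iterMem U k {t : Fin (k + 1) → M | f t = r} := by
  have hsplit := iterMem_split U k k _ h
  obtain ⟨x, hx⟩ := iterMem_nonempty U k _ hsplit
  simp only [Set.mem_setOf_eq] at hx
  refine ⟨x, f x, rfl, ?_⟩
  have : {y : Fin (k + 1) → M | Fin.append x y ∈
      {w : Fin ((k + 1) + (k + 1)) → M |
        f (fun i => w (Fin.castAdd (k + 1) i)) = f (fun i => w (Fin.natAdd (k + 1) i))}} =
      {t : Fin (k + 1) → M | f t = f x} := by
    ext y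
    simp only [Set.mem_setOf_eq, Fin.append_left, Fin.append_right, eq_comm]
  rw [← this]
  exact hx
end

section
/- Let G be a group of permutations of an infinite set A such that every G-orbit is infinite, where G = {αᵐ : m ∈ ℤ} is generated by a single permutation α. Then for all finite subsets X, Y of A there exists m ∈ ℤ such that αᵐ(X) ∩ Y = ∅. -/
/-- If the orbit of `a` under integer powers of `α` is infinite, then the map
`m ↦ α^m a` is injective. -/
lemma orbit_inj {A : Type*} (α : Equiv.Perm A) (a : A)
    (horb : (Set.range fun m : ℤ => (α ^ m) a).Infinite) :
    Function.Injective fun m : ℤ => (α ^ m) a := by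
  intro m n h
  by_contra hne
  apply horb
  -- d > 0 with α^d a = a
  set d : ℤ := |m - n| with hd
  have hd0 : 0 < d := abs_pos.mpr (sub_ne_zero.mpr hne)
  have hfix : (α ^ d) a = a := by
    have h' : (α ^ m) a = (α ^ n) a := h
    have h1 : (α ^ (m - n)) a = a := by
      have e1 : (α ^ (m - n)) ((α ^ n) a) = (α ^ n) a := by
        rw [← Equiv.Perm.mul_apply, ← zpow_add, sub_add_cancel, h']
      have hc : (α ^ (m - n)) ((α ^ n) a) = (α ^ n) ((α ^ (m - n)) a) := by
        rw [← Equiv.Perm.mul_apply, ← Equiv.Perm.mul_apply, ← zpow_add, ← zpow_add, add_comm]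
      exact (α ^ n).injective (by rw [← hc, e1])
    rcases abs_cases (m - n) with ⟨h2, _⟩ | ⟨h2, _⟩
    · rw [hd, h2]; exact h1
    · rw [hd, h2]
      have := congrArg (α ^ (-(m - n))) h1
      simpa [← Equiv.Perm.mul_apply, ← zpow_add] using this.symm
  have hfixall : ∀ k : ℤ, ((α ^ d) ^ k) a = a := fun k =>
    Equiv.Perm.zpow_apply_eq_self_of_apply_eq_self hfix k
  apply Set.Finite.subset ((Set.finite_Ico (0 : ℤ) d).image fun k => (α ^ k) a)
  rintro _ ⟨k, rfl⟩
  refine ⟨k % d, ⟨Int.emod_nonneg k hd0.ne', Int.emod_lt_of_pos k hd0⟩, ?_⟩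
  have hk : (α ^ k) a = (α ^ (k % d)) a := by
    conv_lhs => rw [← Int.emod_add_mul_ediv k d]
    rw [zpow_add, Equiv.Perm.mul_apply, zpow_mul, hfixall]
  simpa using hk.symm

/-- If α is a permutation of an infinite set A all of whose orbits
(under integer powers) are infinite, then for all finite X, Y ⊆ A there is m ∈ ℤ
with α^m(X) ∩ Y = ∅. -/
theorem stmt_16 {A : Type*} [Infinite A] (α : Equiv.Perm A)
    (horb : ∀ a : A, (Set.range fun m : ℤ => (α ^ m) a).Infinite)
    (X Y : Finset A) :
    ∃ m : ℤ, ∀ x ∈ X, (α ^ m) x ∉ Y := by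
  have hbad : (⋃ x ∈ (X : Set A), ⋃ y ∈ (Y : Set A),
      {m : ℤ | (α ^ m) x = y}).Finite := by
    refine X.finite_toSet.biUnion fun x _ => Y.finite_toSet.biUnion fun y _ => ?_
    refine Set.Subsingleton.finite fun m hm n hn => orbit_inj α x (horb x) ?_
    simp only [Set.mem_setOf_eq] at hm hn
    simp [hm, hn]
  obtain ⟨m, hm⟩ := hbad.infinite_compl.nonempty
  refine ⟨m, fun x hx hy => hm ?_⟩
  exact Set.mem_biUnion hx (Set.mem_biUnion hy rfl)
end
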